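/- Let Σ_x, Σ_e ∈ ℝ^{m×m} be symmetric positive definite matrices with all diagonal entries of Σ_x equal to 1, and let B = diag(b₁, …, b_m) be a diagonal matrix such that b_i² + (Σ_e)_{ii} = 1 for all i (equivalently, the matrix Σ_y := B Σ_x B + Σ_e has unit diagonal). Define Σ_d := (I − B²) Σ_x (I − B²) + B Σ_e B. Then log det Σ_y + log det Σ_d ≥ log det Σ_x + log det Σ_e. -/

import Mathlib

/-!
Put `T = [[B, 1], [1 - B², -B]]`, the map `(x, e) ↦ (y, d) = (Bx + e, (1 - B²)x - Be)`. Then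
`T diag(Σ_x, Σ_e) Tᵀ` is the positive definite block matrix with diagonal blocks `Σ_y` and `Σ_d`.
Since `T² = 1`, `det T = ±1`, so its determinant is `det Σ_x det Σ_e`, and Fischer's inequality
bounds it by `det Σ_y det Σ_d`. Fischer's inequality in turn reduces, through the Schur complement,
to `det M ≤ det (M + N)` for positive semidefinite `M`, `N`.
-/

open scoped ComplexOrder

namespace Matrix

variable {𝕜 n : Type*} [RCLike 𝕜] [Fintype n] [DecidableEq n]

theorem PosSemidef.one_le_det_one_add {K : Matrix n n 𝕜} (hK : K.PosSemidef) :
    1 ≤ (1 + K).det := by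
  set U := hK.1.eigenvectorUnitary
  have hdiag : 1 + K = (U : Matrix n n 𝕜) * diagonal (fun i => ((1 + hK.1.eigenvalues i : ℝ) : 𝕜))
      * star (U : Matrix n n 𝕜) := by
    conv_lhs => rw [hK.1.spectral_theorem, ← map_one (Unitary.conjStarAlgAut 𝕜 _ U), ← map_add]
    simp [← diagonal_one, diagonal_add, Function.comp_def]
  rw [hdiag, det_mul_right_comm, Unitary.mul_star_self_of_mem U.2, one_mul, det_diagonal,
    ← RCLike.ofReal_prod, ← RCLike.ofReal_one, RCLike.ofReal_le_ofReal]
  exact Finset.one_le_prod fun i _ => le_add_of_nonneg_right (hK.eigenvalues_nonneg i)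

theorem PosSemidef.det_le_det_add {M N : Matrix n n 𝕜} (hM : M.PosSemidef) (hN : N.PosSemidef) :
    M.det ≤ (M + N).det := by
  rcases eq_or_ne M.det 0 with hdet | hdet
  · exact hdet ▸ (hM.add hN).det_nonneg
  open scoped MatrixOrder in
  obtain ⟨B, rfl⟩ := CStarAlgebra.nonneg_iff_eq_star_mul_self.mp hM.nonneg
  have hB : IsUnit B.det :=
    isUnit_iff_ne_zero.mpr (right_ne_zero_of_mul (det_mul (star B) B ▸ hdet))
  have hsplit : star B * B + N = star B * (1 + star B⁻¹ * N * B⁻¹) * B := by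
    have hB' : star B * star B⁻¹ = 1 := by rw [← star_mul, nonsing_inv_mul B hB, star_one]
    rw [Matrix.mul_add, Matrix.add_mul, Matrix.mul_one, ← Matrix.mul_assoc, ← Matrix.mul_assoc, hB',
      Matrix.one_mul, Matrix.mul_assoc, nonsing_inv_mul B hB, Matrix.mul_one]
  have hK := hN.conjTranspose_mul_mul_same B⁻¹
  rw [hsplit, det_mul_right_comm, det_mul (star B * B)]
  exact le_mul_of_one_le_right hM.det_nonneg hK.one_le_det_one_add

section Blocks

variable {m : Type*} [Fintype m] [DecidableEq m]

theorem PosDef.fromBlocks_zero {A : Matrix m m 𝕜} {D : Matrix n n 𝕜} (hA : A.PosDef)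
    (hD : D.PosDef) : (fromBlocks A 0 0 D).PosDef := by
  have := hA.isUnit.invertible
  have hpsd : (fromBlocks A 0 0ᴴ D).PosSemidef :=
    (hA.fromBlocks₁₁ 0 D).mpr (by simpa using hD.posSemidef)
  rw [conjTranspose_zero] at hpsd
  rw [hpsd.posDef_iff_det_ne_zero, det_fromBlocks_zero₂₁]
  exact mul_ne_zero hA.det_pos.ne' hD.det_pos.ne'

/-- **Fischer's inequality**. -/
theorem PosDef.det_fromBlocks_le {A : Matrix m m 𝕜} {B : Matrix m n 𝕜} {C : Matrix n m 𝕜}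
    {D : Matrix n n 𝕜} (h : (fromBlocks A B C D).PosDef) :
    (fromBlocks A B C D).det ≤ A.det * D.det := by
  obtain rfl : C = Bᴴ := ((isHermitian_fromBlocks_iff.mp h.1).2.1).symm
  have hA : A.PosDef := h.submatrix Sum.inl_injective
  have := hA.isUnit.invertible
  have hschur := (hA.fromBlocks₁₁ B D).mp h.posSemidef
  have hcorr := hA.inv.posSemidef.conjTranspose_mul_mul_same B
  rw [det_fromBlocks₁₁, invOf_eq_nonsing_inv]
  refine mul_le_mul_of_nonneg_left ?_ hA.posSemidef.det_nonneg
  simpa using hschur.det_le_det_add hcorr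

end Blocks

section Mixing

variable {α : Type*} [Ring α]

def mixing (D : Matrix n n α) : Matrix (n ⊕ n) (n ⊕ n) α := fromBlocks D 1 (1 - D * D) (-D)

theorem mixing_mul_self (D : Matrix n n α) : mixing D * mixing D = 1 := by
  simp only [mixing, fromBlocks_multiply, ← fromBlocks_one]
  congr 1 <;> noncomm_ring

variable [StarRing α]

theorem mixing_mul_fromBlocks_mul_conjTranspose {D : Matrix n n α} (hD : D.IsHermitian)
    (X E : Matrix n n α) :
    mixing D * fromBlocks X 0 0 E * (mixing D)ᴴ =
      fromBlocks (D * X * D + E) (D * X * (1 - D * D) - E * D)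
        ((1 - D * D) * X * D - D * E) ((1 - D * D) * X * (1 - D * D) + D * E * D) := by
  simp only [mixing, fromBlocks_conjTranspose, conjTranspose_sub, conjTranspose_mul,
    conjTranspose_one, conjTranspose_neg, hD.eq, fromBlocks_multiply]
  congr 1 <;> noncomm_ring

end Mixing

theorem posDef_mixing_mul_mul_conjTranspose (D : Matrix n n 𝕜) {A : Matrix (n ⊕ n) (n ⊕ n) 𝕜}
    (hA : A.PosDef) : (mixing D * A * (mixing D)ᴴ).PosDef :=
  (IsUnit.posDef_star_right_conjugate_iff (.of_mul_eq_one _ (mixing_mul_self D))).mpr hA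

theorem det_mixing_mul_mul_conjTranspose (D : Matrix n n 𝕜) (A : Matrix (n ⊕ n) (n ⊕ n) 𝕜) :
    (mixing D * A * (mixing D)ᴴ).det = A.det := by
  have hsq : (mixing D).det * (mixing D).det = 1 := by
    rw [← det_mul, mixing_mul_self, det_one]
  rw [det_mul_right_comm, det_mul, det_mul, det_conjTranspose]
  rcases mul_self_eq_one_iff.mp hsq with h | h <;> simp [h]

end Matrix

open Matrix

theorem stmt18_general {m : ℕ} (Sx Se : Matrix (Fin m) (Fin m) ℝ)
    (hx : Sx.PosDef) (he : Se.PosDef)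
    (b : Fin m → ℝ) :
    Real.log Sx.det + Real.log Se.det
      ≤ Real.log (Matrix.diagonal b * Sx * Matrix.diagonal b + Se).det
        + Real.log ((1 - Matrix.diagonal b * Matrix.diagonal b) * Sx
              * (1 - Matrix.diagonal b * Matrix.diagonal b)
            + Matrix.diagonal b * Se * Matrix.diagonal b).det := by
  have hD : (diagonal b).IsHermitian := isHermitian_diagonal b
  have hS := posDef_mixing_mul_mul_conjTranspose (diagonal b) (hx.fromBlocks_zero he)
  have hdet := det_mixing_mul_mul_conjTranspose (diagonal b) (fromBlocks Sx 0 0 Se)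
  rw [mixing_mul_fromBlocks_mul_conjTranspose hD] at hS hdet
  have hSy : (diagonal b * Sx * diagonal b + Se).PosDef := hS.submatrix Sum.inl_injective
  have hSd : ((1 - diagonal b * diagonal b) * Sx * (1 - diagonal b * diagonal b)
      + diagonal b * Se * diagonal b).PosDef := hS.submatrix Sum.inr_injective
  have hfischer := hS.det_fromBlocks_le
  rw [hdet, det_fromBlocks_zero₂₁] at hfischer
  rw [← Real.log_mul hx.det_pos.ne' he.det_pos.ne', ← Real.log_mul hSy.det_pos.ne' hSd.det_pos.ne']
  exact Real.log_le_log (mul_pos hx.det_pos he.det_pos) hfischer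

theorem stmt18 {m : ℕ} (Sx Se : Matrix (Fin m) (Fin m) ℝ)
    (hx : Sx.PosDef) (he : Se.PosDef)
    (hxd : ∀ i, Sx i i = 1)
    (b : Fin m → ℝ) (hb : ∀ i, b i ^ 2 + Se i i = 1) :
    Real.log Sx.det + Real.log Se.det
      ≤ Real.log (Matrix.diagonal b * Sx * Matrix.diagonal b + Se).det
        + Real.log ((1 - Matrix.diagonal b * Matrix.diagonal b) * Sx
              * (1 - Matrix.diagonal b * Matrix.diagonal b)
            + Matrix.diagonal b * Se * Matrix.diagonal b).det :=
  stmt18_general Sx Se hx he b
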